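/- Let 1<p<∞ and φ ∈ 𝒢_p. Then there is a constant C (depending only on n, p, and φ) such that for every κ ∈ 𝒮(ℝⁿ) and every f ∈ 𝓜_{p,φ}(ℝⁿ), ∫_{ℝⁿ} |κ(x) f(x)| dx ≤ C ‖f‖_{𝓜_{p,φ}} · sup_{x∈ℝⁿ} (1+|x|)^{2n+1} |κ(x)|. -/

import Mathlib

open MeasureTheory ENNReal

noncomputable section

/-- Euclidean space `ℝⁿ`. -/
abbrev En (n : ℕ) := EuclideanSpace ℝ (Fin n)

/-- The axis-parallel closed cube with center `c` and side length `ℓ`. -/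
def cube (n : ℕ) (c : En n) (ℓ : ℝ) : Set (En n) :=
  {y | ∀ i, |y i - c i| ≤ ℓ / 2}

/-- The generalized Morrey quasinorm (with exponent `p`) of an `ℝ≥0∞`-valued function. -/
def morrey (n : ℕ) (p : ℝ) (φ : En n → ℝ → ℝ) (g : En n → ℝ≥0∞) : ℝ≥0∞ :=
  ⨆ (c : En n) (ℓ : ℝ) (_ : 0 < ℓ),
    (ENNReal.ofReal (φ c ℓ))⁻¹ *
      ((ENNReal.ofReal (ℓ ^ n))⁻¹ * ∫⁻ y in cube n c ℓ, g y ^ p) ^ (1 / p)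

/-- The generalized Morrey quasinorm of a real-valued function. -/
def morreyR (n : ℕ) (p : ℝ) (φ : En n → ℝ → ℝ) (f : En n → ℝ) : ℝ≥0∞ :=
  morrey n p φ (fun y => ENNReal.ofReal |f y|)

/-- The generalized Morrey quasinorm of a complex-valued function. -/
def morreyC (n : ℕ) (p : ℝ) (φ : En n → ℝ → ℝ) (f : En n → ℂ) : ℝ≥0∞ :=
  morrey n p φ (fun y => ENNReal.ofReal ‖f y‖)

/-- The generalized Morrey norm with exponent `q : ℝ≥0∞` (allowing `q = ∞`). -/
def morreyL (n : ℕ) (q : ℝ≥0∞) (φ : En n → ℝ → ℝ) (f : En n → ℝ) : ℝ≥0∞ :=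
  ⨆ (c : En n) (ℓ : ℝ) (_ : 0 < ℓ),
    (ENNReal.ofReal (φ c ℓ))⁻¹ * (ENNReal.ofReal (ℓ ^ n)) ^ (-(1 / q).toReal) *
      eLpNorm f q (volume.restrict (cube n c ℓ))

/-- The weak generalized Morrey quasinorm. -/
def wMorrey (n : ℕ) (p : ℝ) (φ : En n → ℝ → ℝ) (g : En n → ℝ≥0∞) : ℝ≥0∞ :=
  ⨆ (T : ℝ) (_ : 0 < T),
    ENNReal.ofReal T *
      morrey n p φ ({y | ENNReal.ofReal T < g y}.indicator fun _ => 1)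

/-- The class `𝒢_p`, with explicit almost-increasing constant `C`. -/
def GClassC (n : ℕ) (p : ℝ) (φ : En n → ℝ → ℝ) (C : ℝ) : Prop :=
  (∀ x r, 0 < r → 0 < φ x r) ∧
  (∀ x s r, 0 < s → s ≤ r → φ x r ≤ φ x s) ∧
  (1 ≤ C ∧ ∀ x s r, 0 < s → s ≤ r →
    φ x s * s ^ ((n : ℝ) / p) ≤ C * (φ x r * r ^ ((n : ℝ) / p)))

/-- The class `𝒢_p`. -/
def GClass (n : ℕ) (p : ℝ) (φ : En n → ℝ → ℝ) : Prop :=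
  ∃ C, GClassC n p φ C

/-- The `ℓ_q` norm of a sequence of extended nonnegative reals. -/
def lqNorm (q : ℝ≥0∞) (a : ℕ → ℝ≥0∞) : ℝ≥0∞ :=
  if q = ⊤ then ⨆ j, a j else (∑' j, a j ^ q.toReal) ^ (1 / q.toReal)

/-- The Hardy-Littlewood maximal function (over cubes). -/
def hlM (n : ℕ) (f : En n → ℝ) (x : En n) : ℝ≥0∞ :=
  ⨆ (c : En n) (ℓ : ℝ) (_ : 0 < ℓ) (_ : x ∈ cube n c ℓ),
    (ENNReal.ofReal (ℓ ^ n))⁻¹ * ∫⁻ y in cube n c ℓ, ENNReal.ofReal |f y|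

/-- `ℓ^∞` distance on `ℝⁿ`. -/
def linf (n : ℕ) (x y : En n) : ℝ := ⨆ i, |x i - y i|

/-- Tempered distributions on `ℝⁿ`. -/
abbrev TempDist (n : ℕ) := SchwartzMap (En n) ℝ →L[ℝ] ℝ

/-- The Schwartz seminorm quantity `p_N`. -/
def pN (n N : ℕ) (ψ : SchwartzMap (En n) ℝ) : ℝ≥0∞ :=
  ∑ m ∈ Finset.range (N + 1),
    ⨆ x : En n, ENNReal.ofReal ((1 + ‖x‖) ^ N * ‖iteratedFDeriv ℝ m (⇑ψ) x‖)

/-- The grand maximal function of a tempered distribution. -/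
def grandMax (n N : ℕ) (f : TempDist n) (x : En n) : ℝ≥0∞ :=
  ⨆ (ψ : SchwartzMap (En n) ℝ) (_ : pN n N ψ ≤ 1) (t : ℝ) (_ : 0 < t)
    (η : SchwartzMap (En n) ℝ) (_ : ∀ y, η y = (t ^ n)⁻¹ * ψ (t⁻¹ • (x - y))),
    ENNReal.ofReal |f η|

/-- The generalized Hardy-Morrey quasinorm, via the grand maximal function. -/
def hMorrey (n : ℕ) (p : ℝ) (φ : En n → ℝ → ℝ) (N : ℕ) (f : TempDist n) : ℝ≥0∞ :=
  morrey n p φ (grandMax n N f)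

/-- The heat maximal function `sup_{t>0} |e^{tΔ}f|` of a tempered distribution. -/
def heatMax (n : ℕ) (f : TempDist n) (x : En n) : ℝ≥0∞ :=
  ⨆ (t : ℝ) (_ : 0 < t) (η : SchwartzMap (En n) ℝ)
    (_ : ∀ y, η y = (4 * Real.pi * t) ^ (-(n : ℝ) / 2) *
      Real.exp (-‖x - y‖ ^ 2 / (4 * t))),
    ENNReal.ofReal |f η|

/-- The Peetre maximal function. -/
def peetreMax (n : ℕ) (r d : ℝ) (f : En n → ℂ) (x : En n) : ℝ≥0∞ :=
  ⨆ y : En n, ENNReal.ofReal (‖f (x - y)‖ / (1 + d * ‖y‖ ^ ((n : ℝ) / r)))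

/-- The (distributional) Fourier transform of `f` is supported in `Ω`. -/
def ftSupportedIn (n : ℕ) (f : En n → ℂ) (Ω : Set (En n)) : Prop :=
  ∀ ψ : SchwartzMap (En n) ℂ, Disjoint (tsupport ⇑ψ) Ω →
    ∫ x, f x * (SchwartzMap.fourierTransformCLM ℂ ψ) x = 0

/-!
On the dyadic shell `2 ^ j ≤ 1 + ‖x‖ < 2 ^ (j + 1)` the Schwartz function is at most
`M / 2 ^ (j (2n + 1))`, where `M = sup (1 + ‖x‖) ^ (2n + 1) |κ x|`, and the shell lies in the cube
of side `2 ^ (j + 2)` centred at the origin. By Jensen's inequality and the monotonicity of `φ`, the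
integral of `|f|` over that cube is at most `φ(0, 1) 2 ^ ((j + 2) n) ‖f‖_{𝓜_{p,φ}}`. Hence the shell
contributes at most `4 ^ n φ(0, 1) M 2 ^ (-j) ‖f‖_{𝓜_{p,φ}}`, and the geometric series sums to the
claim with `C = 2 · 4 ^ n φ(0, 1)`.
-/

open ProbabilityTheory Set

lemma volume_cube (n : ℕ) (c : En n) {ℓ : ℝ} (hℓ : 0 ≤ ℓ) :
    volume (cube n c ℓ) = ENNReal.ofReal (ℓ ^ n) := by
  have h : cube n c ℓ = (MeasurableEquiv.toLp 2 (Fin n → ℝ)).symm ⁻¹'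
      univ.pi fun i => Icc (c i - ℓ / 2) (c i + ℓ / 2) := by
    ext y
    simp only [cube, mem_preimage, mem_univ_pi, mem_Icc,
      MeasurableEquiv.coe_toLp_symm, abs_le]
    exact forall_congr' fun i => by constructor <;> rintro ⟨h₁, h₂⟩ <;> constructor <;> linarith
  rw [h, (EuclideanSpace.volume_preserving_symm_measurableEquiv_toLp (Fin n)).measure_preimage
      (MeasurableSet.univ_pi fun _ => measurableSet_Icc).nullMeasurableSet, volume_pi_pi]
  simp [Real.volume_Icc, ENNReal.ofReal_pow hℓ]

lemma lintegral_cube_le_morrey {n : ℕ} {p : ℝ} (hp : 1 ≤ p) {φ : En n → ℝ → ℝ}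
    {g : En n → ℝ≥0∞} (hg : AEMeasurable g) {c : En n} {ℓ : ℝ} (hℓ : 0 < ℓ)
    (hφ : 0 < φ c ℓ) :
    ∫⁻ y in cube n c ℓ, g y ≤ ENNReal.ofReal (φ c ℓ * ℓ ^ n) * morrey n p φ g := by
  set V := ENNReal.ofReal (ℓ ^ n)
  have hV : volume (cube n c ℓ) = V := volume_cube n c hℓ.le
  have hV0 : V ≠ 0 := by positivity
  have hΦ0 : ENNReal.ofReal (φ c ℓ) ≠ 0 := by positivity
  -- Jensen's inequality for the probability measure `volume[|cube n c ℓ]`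
  have average_le : V⁻¹ * ∫⁻ y in cube n c ℓ, g y ≤
      (V⁻¹ * ∫⁻ y in cube n c ℓ, g y ^ p) ^ (1 / p) := by
    have := cond_isProbabilityMeasure_of_finite (hV ▸ hV0) (hV ▸ ENNReal.ofReal_ne_top)
    have := eLpNorm'_le_eLpNorm'_of_exponent_le one_pos hp (volume[|cube n c ℓ])
      (hg.mono_ac cond_absolutelyContinuous).aestronglyMeasurable
    simpa [eLpNorm', ProbabilityTheory.cond, lintegral_smul_measure, hV] using this
  have morrey_ge : (ENNReal.ofReal (φ c ℓ))⁻¹ *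
      (V⁻¹ * ∫⁻ y in cube n c ℓ, g y ^ p) ^ (1 / p) ≤ morrey n p φ g :=
    le_iSup_of_le c <| le_iSup_of_le ℓ <| le_iSup_of_le hℓ le_rfl
  calc ∫⁻ y in cube n c ℓ, g y
      = V * (V⁻¹ * ∫⁻ y in cube n c ℓ, g y) := by
        rw [ENNReal.mul_inv_cancel_left hV0 ENNReal.ofReal_ne_top]
    _ ≤ V * (ENNReal.ofReal (φ c ℓ) * ((ENNReal.ofReal (φ c ℓ))⁻¹ *
          (V⁻¹ * ∫⁻ y in cube n c ℓ, g y ^ p) ^ (1 / p))) := by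
        rw [ENNReal.mul_inv_cancel_left hΦ0 ENNReal.ofReal_ne_top]
        gcongr
    _ ≤ ENNReal.ofReal (φ c ℓ * ℓ ^ n) * morrey n p φ g := by
        rw [← mul_assoc, mul_comm V, ← ENNReal.ofReal_mul hφ.le]
        gcongr

lemma lintegral_cube_le_morreyR_of_one_le {n : ℕ} {p : ℝ} (hp : 1 ≤ p) {φ : En n → ℝ → ℝ}
    (hφpos : ∀ x r, 0 < r → 0 < φ x r) (hφanti : ∀ x s r, 0 < s → s ≤ r → φ x r ≤ φ x s)
    {f : En n → ℝ} (hf : Measurable f) (c : En n) {ℓ : ℝ} (hℓ : 1 ≤ ℓ) :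
    ∫⁻ x in cube n c ℓ, ENNReal.ofReal |f x| ≤
      ENNReal.ofReal (φ c 1 * ℓ ^ n) * morreyR n p φ f := by
  refine (lintegral_cube_le_morrey hp hf.abs.ennreal_ofReal.aemeasurable (by positivity)
    (hφpos _ _ (by positivity))).trans ?_
  gcongr
  exacts [hφanti c 1 ℓ one_pos hℓ, le_rfl]

def dyadicShell (E : Type*) [Norm E] (j : ℕ) : Set E :=
  {x | 2 ^ j ≤ 1 + ‖x‖ ∧ 1 + ‖x‖ < 2 ^ (j + 1)}

lemma iUnion_dyadicShell (E : Type*) [SeminormedAddGroup E] : ⋃ j, dyadicShell E j = univ :=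
  eq_univ_of_forall fun x => mem_iUnion.2 <|
    exists_nat_pow_near (by linarith [norm_nonneg x]) one_lt_two

lemma dyadicShell_subset_cube (n j : ℕ) : dyadicShell (En n) j ⊆ cube n 0 (2 ^ (j + 2)) := by
  intro x hx i
  have : ‖x i‖ ≤ ‖x‖ := PiLp.norm_apply_le x i
  rw [PiLp.zero_apply, sub_zero, ← Real.norm_eq_abs, pow_succ, mul_div_cancel_right₀ _ two_ne_zero]
  linarith [hx.2]

lemma abs_le_div_of_mem_dyadicShell {E : Type*} [Norm E] {κ : E → ℝ} {k : ℕ} {M : ℝ}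
    (hM : ∀ x, (1 + ‖x‖) ^ k * |κ x| ≤ M) {j : ℕ} {x : E} (hx : x ∈ dyadicShell E j) :
    |κ x| ≤ M / (2 ^ j) ^ k := by
  rw [le_div_iff₀ (by positivity)]
  calc |κ x| * (2 ^ j) ^ k ≤ |κ x| * (1 + ‖x‖) ^ k := by gcongr; exact hx.1
    _ ≤ M := by linarith [hM x]

lemma SchwartzMap.bddAbove_one_add_norm_pow_mul_norm {E F : Type*} [NormedAddCommGroup E]
    [NormedSpace ℝ E] [NormedAddCommGroup F] [NormedSpace ℝ F] (κ : SchwartzMap E F) (k : ℕ) :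
    BddAbove (range fun x => (1 + ‖x‖) ^ k * ‖κ x‖) :=
  ⟨_, forall_mem_range.2 fun x => by
    simpa using SchwartzMap.one_add_le_sup_seminorm_apply (𝕜 := ℝ) (m := (k, 0)) le_rfl le_rfl κ x⟩

lemma setLIntegral_dyadicShell_le {n : ℕ} {p : ℝ} (hp : 1 ≤ p) {φ : En n → ℝ → ℝ}
    (hφpos : ∀ x r, 0 < r → 0 < φ x r) (hφanti : ∀ x s r, 0 < s → s ≤ r → φ x r ≤ φ x s)
    {κ f : En n → ℝ} (hf : Measurable f) {M : ℝ}
    (hM : ∀ x, (1 + ‖x‖) ^ (2 * n + 1) * |κ x| ≤ M) (j : ℕ) :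
    ∫⁻ x in dyadicShell (En n) j, ENNReal.ofReal |κ x * f x| ≤
      ENNReal.ofReal (4 ^ n * φ 0 1 * M) * 2⁻¹ ^ j * morreyR n p φ f := by
  set t : ℝ := 2 ^ j
  have ht : 1 ≤ t := one_le_pow₀ one_le_two
  have hφ1 : 0 < φ 0 1 := hφpos 0 1 one_pos
  have hM0 : 0 ≤ M := (by positivity : 0 ≤ (1 + ‖(0 : En n)‖) ^ (2 * n + 1) * |κ 0|).trans (hM 0)
  have hdecay : M / t ^ (2 * n + 1) * (φ 0 1 * (2 ^ (j + 2)) ^ n) ≤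
      4 ^ n * φ 0 1 * M * 2⁻¹ ^ j := by
    have h4t : ((2 : ℝ) ^ (j + 2)) ^ n = 4 ^ n * t ^ n := by
      rw [← mul_pow, pow_add]; norm_num [t, mul_comm]
    calc M / t ^ (2 * n + 1) * (φ 0 1 * (2 ^ (j + 2)) ^ n)
        = 4 ^ n * φ 0 1 * M * t⁻¹ / t ^ n := by
          rw [h4t]; field_simp; ring
      _ ≤ 4 ^ n * φ 0 1 * M * 2⁻¹ ^ j := by
          rw [inv_pow]
          exact div_le_self (by positivity) (one_le_pow₀ ht)
  calc ∫⁻ x in dyadicShell (En n) j, ENNReal.ofReal |κ x * f x|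
      ≤ ∫⁻ x in dyadicShell (En n) j,
          ENNReal.ofReal (M / t ^ (2 * n + 1)) * ENNReal.ofReal |f x| := by
        refine setLIntegral_mono (by fun_prop) fun x hx => ?_
        rw [abs_mul, ENNReal.ofReal_mul (abs_nonneg _)]
        gcongr
        exact abs_le_div_of_mem_dyadicShell hM hx
    _ ≤ ENNReal.ofReal (M / t ^ (2 * n + 1)) *
          ∫⁻ x in cube n 0 (2 ^ (j + 2)), ENNReal.ofReal |f x| := by
        rw [lintegral_const_mul _ (by fun_prop)]
        gcongr
        exact dyadicShell_subset_cube n j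
    _ ≤ ENNReal.ofReal (M / t ^ (2 * n + 1) * (φ 0 1 * (2 ^ (j + 2)) ^ n)) *
          morreyR n p φ f := by
        rw [ENNReal.ofReal_mul (by positivity), mul_assoc]
        gcongr
        exact lintegral_cube_le_morreyR_of_one_le hp hφpos hφanti hf 0 (one_le_pow₀ one_le_two)
    _ ≤ ENNReal.ofReal (4 ^ n * φ 0 1 * M) * 2⁻¹ ^ j * morreyR n p φ f := by
        grw [hdecay]
        rw [ENNReal.ofReal_mul (by positivity), ENNReal.ofReal_pow (by norm_num),
          ENNReal.ofReal_inv_of_pos two_pos, ENNReal.ofReal_ofNat]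

theorem statement9_general (n : ℕ) (p : ℝ) (hp1 : 1 < p)
    (φ : En n → ℝ → ℝ) (hφ : GClass n p φ) :
    ∃ C : ℝ, 0 < C ∧
      ∀ (κ : SchwartzMap (En n) ℝ) (f : En n → ℝ), Measurable f → morreyR n p φ f ≠ ⊤ →
        (∫⁻ x, ENNReal.ofReal |κ x * f x|) ≤
          ENNReal.ofReal (C * ⨆ x : En n, (1 + ‖x‖) ^ (2 * n + 1) * |κ x|) *
            morreyR n p φ f := by
  obtain ⟨-, hφpos, hφanti, -⟩ := hφ
  refine ⟨2 * 4 ^ n * φ 0 1, by have := hφpos 0 1 one_pos; positivity, fun κ f hf _ => ?_⟩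
  set M := ⨆ x : En n, (1 + ‖x‖) ^ (2 * n + 1) * |κ x|
  have hM : ∀ x, (1 + ‖x‖) ^ (2 * n + 1) * |κ x| ≤ M :=
    le_ciSup (by simpa using κ.bddAbove_one_add_norm_pow_mul_norm (2 * n + 1))
  calc ∫⁻ x, ENNReal.ofReal |κ x * f x|
      = ∫⁻ x in ⋃ j, dyadicShell (En n) j, ENNReal.ofReal |κ x * f x| := by
        rw [iUnion_dyadicShell, setLIntegral_univ]
    _ ≤ ∑' j, ∫⁻ x in dyadicShell (En n) j, ENNReal.ofReal |κ x * f x| :=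
        lintegral_iUnion_le _ _
    _ ≤ ∑' j, ENNReal.ofReal (4 ^ n * φ 0 1 * M) * 2⁻¹ ^ j * morreyR n p φ f :=
        ENNReal.tsum_le_tsum
          (setLIntegral_dyadicShell_le hp1.le hφpos hφanti hf hM)
    _ = ENNReal.ofReal (2 * 4 ^ n * φ 0 1 * M) * morreyR n p φ f := by
        rw [ENNReal.tsum_mul_right, ENNReal.tsum_mul_left, ENNReal.tsum_geometric_two,
          mul_assoc 2, mul_assoc 2, ENNReal.ofReal_mul zero_le_two, ENNReal.ofReal_ofNat,
          mul_comm 2]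

theorem statement9 (n : ℕ) (hn : 0 < n) (p : ℝ) (hp1 : 1 < p)
    (φ : En n → ℝ → ℝ) (hφ : GClass n p φ) :
    ∃ C : ℝ, 0 < C ∧
      ∀ (κ : SchwartzMap (En n) ℝ) (f : En n → ℝ), Measurable f → morreyR n p φ f ≠ ⊤ →
        (∫⁻ x, ENNReal.ofReal |κ x * f x|) ≤
          ENNReal.ofReal (C * ⨆ x : En n, (1 + ‖x‖) ^ (2 * n + 1) * |κ x|) *
            morreyR n p φ f :=
  statement9_general n p hp1 φ hφ

end
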